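/- Let H be a finite linear 3-uniform hypergraph, and let M be a real 2×2 matrix with M11 = M22 and M11 + M22 < M12 + M21. Construct the digraph D with V(D) = V(H) by, for each edge e = {x, y, z} of H, adding the directed 3-cycle with arcs xy, yz, zx (for some fixed enumeration x, y, z of the vertices of e), each arc carrying cost 1 and matrix M. Then: (i) for every partition P of V(D), w^P(D) ≤ |E(H)| · (M11 + M12 + M21); and (ii) there exists a partition P with w^P(D) = |E(H)| · (M11 + M12 + M21) if and only if H is 2-colorable. -/
import Mathlib


/-- The weight `w^P(uv)` of an arc from `u` to `v` carrying cost `1` and matrix `M`,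
under the partition `P = (X1, V \ X1)`. -/
def arcW {V : Type*} [DecidableEq V] (X1 : Finset V)
    (M : Matrix (Fin 2) (Fin 2) ℝ) (u v : V) : ℝ :=
  if u ∈ X1 then (if v ∈ X1 then M 0 0 else M 0 1)
  else (if v ∈ X1 then M 1 0 else M 1 1)

lemma tripleW {V : Type*} [DecidableEq V] (X1 : Finset V)
    (M : Matrix (Fin 2) (Fin 2) ℝ)
    (hMeq : M 0 0 = M 1 1)
    (hMlt : M 0 0 + M 1 1 < M 0 1 + M 1 0) (x y z : V) :
    (arcW X1 M x y + arcW X1 M y z + arcW X1 M z x ≤ M 0 0 + M 0 1 + M 1 0) ∧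
    (arcW X1 M x y + arcW X1 M y z + arcW X1 M z x = M 0 0 + M 0 1 + M 1 0 ↔
      ¬((x ∈ X1 ↔ y ∈ X1) ∧ (y ∈ X1 ↔ z ∈ X1))) := by
  by_cases hx : x ∈ X1 <;> by_cases hy : y ∈ X1 <;> by_cases hz : z ∈ X1 <;>
    simp only [arcW, hx, hy, hz, if_true, if_false, hMeq, iff_true, iff_false,
      not_true, not_false_iff, and_true, true_and, and_false, false_and, not_not,
      not_and, eq_self_iff_true, iff_self] <;>
    (try constructor) <;> linarith

lemma triple_distinct {V : Type*} [DecidableEq V] {a b c : V}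
    (h : ({a, b, c} : Finset V).card = 3) : a ≠ b ∧ b ≠ c ∧ a ≠ c := by
  refine ⟨?_, ?_, ?_⟩ <;> rintro rfl
  · have : ({a, a, c} : Finset V) = {a, c} := by ext x; simp only [Finset.mem_insert, Finset.mem_singleton]; tauto
    rw [this] at h
    have := Finset.card_insert_le a ({c} : Finset V)
    simp at this h; omega
  · have : ({a, b, b} : Finset V) = {a, b} := by ext x; simp only [Finset.mem_insert, Finset.mem_singleton]; tauto
    rw [this] at h
    have := Finset.card_insert_le a ({b} : Finset V)
    simp at this h; omega
  · have : ({a, b, a} : Finset V) = {a, b} := by ext x; simp only [Finset.mem_insert, Finset.mem_singleton]; tauto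
    rw [this] at h
    have := Finset.card_insert_le a ({b} : Finset V)
    simp at this h; omega

lemma fin2_eq {a b : Fin 2} (h : a = 0 ↔ b = 0) : a = b := by
  fin_cases a <;> fin_cases b <;> simp_all

/-- Let `H` be a finite linear 3-uniform hypergraph with edge set `E`, each edge `e ∈ E`
enumerated as `v1 e, v2 e, v3 e`, and let `M` be a `2×2` real matrix with
`M11 = M22` and `M11 + M22 < M12 + M21`. Form the digraph `D` whose arcs are the directed
3-cycles `v1 e → v2 e → v3 e → v1 e` for `e ∈ E`, each arc with cost `1` and matrix `M`.
Then every partition `P` satisfies `w^P(D) ≤ |E| · (M11 + M12 + M21)`, and this value is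
attained by some partition iff `H` is 2-colorable. -/
theorem linear_hypergraph_mwdp {V : Type*} [DecidableEq V]
    (E : Finset (Finset V)) (v1 v2 v3 : Finset V → V)
    (h3 : ∀ e ∈ E, e.card = 3)
    (hlin : ∀ e ∈ E, ∀ f ∈ E, e ≠ f → (e ∩ f).card ≤ 1)
    (henum : ∀ e ∈ E, ({v1 e, v2 e, v3 e} : Finset V) = e)
    (M : Matrix (Fin 2) (Fin 2) ℝ)
    (hMeq : M 0 0 = M 1 1)
    (hMlt : M 0 0 + M 1 1 < M 0 1 + M 1 0) :
    (∀ X1 : Finset V,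
        (∑ a ∈ E.biUnion (fun e =>
            {(v1 e, v2 e), (v2 e, v3 e), (v3 e, v1 e)}), arcW X1 M a.1 a.2)
          ≤ E.card * (M 0 0 + M 0 1 + M 1 0)) ∧
    ((∃ X1 : Finset V,
        (∑ a ∈ E.biUnion (fun e =>
            {(v1 e, v2 e), (v2 e, v3 e), (v3 e, v1 e)}), arcW X1 M a.1 a.2)
          = E.card * (M 0 0 + M 0 1 + M 1 0)) ↔
      (∃ χ : V → Fin 2, ∀ e ∈ E, ∃ u ∈ e, ∃ v ∈ e, χ u ≠ χ v)) := by
  classical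
  set S : Finset V → Finset (V × V) :=
    fun e => {(v1 e, v2 e), (v2 e, v3 e), (v3 e, v1 e)} with hS
  have hdist : ∀ e ∈ E, v1 e ≠ v2 e ∧ v2 e ≠ v3 e ∧ v1 e ≠ v3 e := fun e he =>
    triple_distinct (by rw [henum e he]; exact h3 e he)
  have hmem : ∀ e ∈ E, v1 e ∈ e ∧ v2 e ∈ e ∧ v3 e ∈ e := by
    intro e he
    have h1 : v1 e ∈ ({v1 e, v2 e, v3 e} : Finset V) := by simp
    have h2 : v2 e ∈ ({v1 e, v2 e, v3 e} : Finset V) := by simp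
    have h3' : v3 e ∈ ({v1 e, v2 e, v3 e} : Finset V) := by simp
    rw [henum e he] at h1 h2 h3'
    exact ⟨h1, h2, h3'⟩
  have harc : ∀ e ∈ E, ∀ p ∈ S e, p.1 ∈ e ∧ p.2 ∈ e ∧ p.1 ≠ p.2 := by
    intro e he p hp
    obtain ⟨m1, m2, m3⟩ := hmem e he
    obtain ⟨d12, d23, d13⟩ := hdist e he
    simp only [hS, Finset.mem_insert, Finset.mem_singleton] at hp
    rcases hp with rfl | rfl | rfl
    · exact ⟨m1, m2, d12⟩
    · exact ⟨m2, m3, d23⟩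
    · exact ⟨m3, m1, fun h => d13 h.symm⟩
  have hdisj : (E : Set (Finset V)).PairwiseDisjoint S := by
    intro e he f hf hef
    rw [Function.onFun, Finset.disjoint_left]
    intro p hpe hpf
    obtain ⟨h1e, h2e, hne⟩ := harc e (Finset.mem_coe.mp he) p hpe
    obtain ⟨h1f, h2f, -⟩ := harc f (Finset.mem_coe.mp hf) p hpf
    have hsub : ({p.1, p.2} : Finset V) ⊆ e ∩ f := by
      intro x hx
      simp only [Finset.mem_insert, Finset.mem_singleton] at hx
      rcases hx with rfl | rfl <;> simp [Finset.mem_inter, *]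
    have h2 : 2 ≤ (e ∩ f).card := by
      have hc := Finset.card_le_card hsub
      rwa [Finset.card_insert_of_notMem (by simpa using hne),
        Finset.card_singleton] at hc
    have := hlin e (Finset.mem_coe.mp he) f (Finset.mem_coe.mp hf) hef
    omega
  have hsplit : ∀ X1 : Finset V,
      (∑ a ∈ E.biUnion S, arcW X1 M a.1 a.2)
        = ∑ e ∈ E, (arcW X1 M (v1 e) (v2 e) + arcW X1 M (v2 e) (v3 e)
            + arcW X1 M (v3 e) (v1 e)) := by
    intro X1
    rw [Finset.sum_biUnion hdisj]
    refine Finset.sum_congr rfl fun e he => ?_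
    obtain ⟨d12, d23, d13⟩ := hdist e he
    have hn1 : ((v1 e, v2 e) : V × V) ∉ ({(v2 e, v3 e), (v3 e, v1 e)} : Finset (V × V)) := by
      simp only [Finset.mem_insert, Finset.mem_singleton, Prod.mk.injEq, not_or]
      exact ⟨fun h => d12 h.1, fun h => d13 h.1⟩
    have hn2 : ((v2 e, v3 e) : V × V) ∉ ({(v3 e, v1 e)} : Finset (V × V)) := by
      simp only [Finset.mem_singleton, Prod.mk.injEq, not_and]
      exact fun h => absurd h d23
    rw [hS]
    rw [Finset.sum_insert hn1, Finset.sum_insert hn2, Finset.sum_singleton]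
    ring
  have hub : ∀ X1 : Finset V,
      (∑ a ∈ E.biUnion S, arcW X1 M a.1 a.2) ≤ E.card * (M 0 0 + M 0 1 + M 1 0) := by
    intro X1
    rw [hsplit X1]
    calc ∑ e ∈ E, (arcW X1 M (v1 e) (v2 e) + arcW X1 M (v2 e) (v3 e)
            + arcW X1 M (v3 e) (v1 e))
        ≤ ∑ _e ∈ E, (M 0 0 + M 0 1 + M 1 0) :=
          Finset.sum_le_sum fun e _ => (tripleW X1 M hMeq hMlt _ _ _).1
      _ = E.card * (M 0 0 + M 0 1 + M 1 0) := by
          rw [Finset.sum_const, nsmul_eq_mul]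
  refine ⟨hub, ?_, ?_⟩
  · rintro ⟨X1, hX1⟩
    refine ⟨fun v => if v ∈ X1 then 0 else 1, fun e he => ?_⟩
    have hle : ∀ f ∈ E, arcW X1 M (v1 f) (v2 f) + arcW X1 M (v2 f) (v3 f)
        + arcW X1 M (v3 f) (v1 f) ≤ M 0 0 + M 0 1 + M 1 0 :=
      fun f _ => (tripleW X1 M hMeq hMlt _ _ _).1
    have heq : arcW X1 M (v1 e) (v2 e) + arcW X1 M (v2 e) (v3 e)
        + arcW X1 M (v3 e) (v1 e) = M 0 0 + M 0 1 + M 1 0 := by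
      by_contra hne
      have hlt := lt_of_le_of_ne (hle e he) hne
      have hsum : ∑ f ∈ E, (arcW X1 M (v1 f) (v2 f) + arcW X1 M (v2 f) (v3 f)
          + arcW X1 M (v3 f) (v1 f)) < ∑ _f ∈ E, (M 0 0 + M 0 1 + M 1 0) :=
        Finset.sum_lt_sum hle ⟨e, he, hlt⟩
      rw [hsplit X1] at hX1
      rw [Finset.sum_const, nsmul_eq_mul] at hsum
      linarith
    have hmono := (tripleW X1 M hMeq hMlt (v1 e) (v2 e) (v3 e)).2.mp heq
    obtain ⟨m1, m2, m3⟩ := hmem e he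
    rw [not_and_or] at hmono
    rcases hmono with h | h
    · refine ⟨v1 e, m1, v2 e, m2, ?_⟩
      by_cases h1 : v1 e ∈ X1 <;> by_cases h2 : v2 e ∈ X1 <;> simp_all
    · refine ⟨v2 e, m2, v3 e, m3, ?_⟩
      by_cases h1 : v2 e ∈ X1 <;> by_cases h2 : v3 e ∈ X1 <;> simp_all
  · rintro ⟨χ, hχ⟩
    refine ⟨(E.biUnion id).filter (fun v => χ v = 0), ?_⟩
    set X1 : Finset V := (E.biUnion id).filter (fun v => χ v = 0) with hX1def
    have hmemX : ∀ e ∈ E, ∀ v ∈ e, (v ∈ X1 ↔ χ v = 0) := by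
      intro e he v hv
      simp only [hX1def, Finset.mem_filter, Finset.mem_biUnion, id]
      exact ⟨fun h => h.2, fun h => ⟨⟨e, he, hv⟩, h⟩⟩
    have hall : ∀ e ∈ E, arcW X1 M (v1 e) (v2 e) + arcW X1 M (v2 e) (v3 e)
        + arcW X1 M (v3 e) (v1 e) = M 0 0 + M 0 1 + M 1 0 := by
      intro e he
      apply (tripleW X1 M hMeq hMlt _ _ _).2.mpr
      rintro ⟨h12, h23⟩
      obtain ⟨m1, m2, m3⟩ := hmem e he
      have c12 : χ (v1 e) = χ (v2 e) :=
        fin2_eq (((hmemX e he _ m1).symm.trans h12).trans (hmemX e he _ m2))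
      have c23 : χ (v2 e) = χ (v3 e) :=
        fin2_eq (((hmemX e he _ m2).symm.trans h23).trans (hmemX e he _ m3))
      have c13 : χ (v1 e) = χ (v3 e) := c12.trans c23
      obtain ⟨u, hu, w, hw, huw⟩ := hχ e he
      rw [← henum e he] at hu hw
      simp only [Finset.mem_insert, Finset.mem_singleton] at hu hw
      rcases hu with rfl | rfl | rfl <;> rcases hw with rfl | rfl | rfl <;>
        first
        | exact huw rfl
        | exact huw c12
        | exact huw c23
        | exact huw c13
        | exact huw c12.symm
        | exact huw c23.symm
        | exact huw c13.symm
    rw [hsplit X1, Finset.sum_congr rfl hall, Finset.sum_const, nsmul_eq_mul]
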